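/- arXiv:1608.04973 — 3 statements merged into one kernel-verified Lean document; each statement's English description precedes it below -/
import Mathlib

section
/- Let G=(V,E) be a finite simple graph with |E| ≥ 1 and let K be a field. Then the cut ideal I_G is the zero ideal (equivalently, the cut algebra K[G] is isomorphic to a polynomial ring over K) if and only if G is the complete graph K_2 on two vertices or the complete graph K_3 on three vertices. -/
open scoped Classical

noncomputable section

namespace CutPaper

open MvPolynomial

/-- An edge `e` is cut by the partition `A | Aᶜ` if it has exactly one endpoint in `A`. -/
def IsCutEdge {V : Type} (A : Set V) (e : Sym2 V) : Prop :=
  ∃ u v : V, e = s(u, v) ∧ u ∈ A ∧ v ∉ A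

/-- The cut set of `A`: all edges of `G` with exactly one endpoint in `A`. -/
def cutSet {V : Type} (G : SimpleGraph V) (A : Set V) : Set (Sym2 V) :=
  {e ∈ G.edgeSet | IsCutEdge A e}

lemma isCutEdge_compl {V : Type} (A : Set V) (e : Sym2 V) :
    IsCutEdge Aᶜ e ↔ IsCutEdge A e := by
  constructor <;> rintro ⟨u, v, rfl, hu, hv⟩
  · exact ⟨v, u, Sym2.eq_swap, Set.notMem_compl_iff.mp hv, hu⟩
  · exact ⟨v, u, Sym2.eq_swap, hv, not_not_intro hu⟩

/-- Two subsets determine the same unordered partition `A | Aᶜ` of `V`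
iff they are equal or complementary. -/
def partitionSetoid (V : Type) : Setoid (Set V) where
  r A B := B = A ∨ B = Aᶜ
  iseqv := by
    refine ⟨fun A => Or.inl rfl, @fun A B h => ?_, @fun A B C h1 h2 => ?_⟩
    · rcases h with rfl | rfl
      · exact Or.inl rfl
      · exact Or.inr (compl_compl A).symm
    · rcases h1 with rfl | rfl <;> rcases h2 with rfl | rfl
      · exact Or.inl rfl
      · exact Or.inr rfl
      · exact Or.inr rfl
      · exact Or.inl (compl_compl A)

/-- The unordered partitions `A | Aᶜ` of `V`, indexing the variables of `S_G`. -/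
abbrev Partition (V : Type) := Quotient (partitionSetoid V)

variable (K : Type) [CommRing K]

/-- The variable `q_{A|Aᶜ}` of the polynomial ring `S_G`. -/
def qPart {V : Type} (A : Set V) : MvPolynomial (Partition V) K :=
  X (Quotient.mk (partitionSetoid V) A)

/-- The monomial `u_A = ∏_{e ∈ Cut(A)} s_e · ∏_{e ∈ E \ Cut(A)} t_e`;
the variable `s_e` is `X (true, e)` and `t_e` is `X (false, e)`. -/
def cutMonomial {V : Type} [Finite V] (G : SimpleGraph V) (A : Set V) :
    MvPolynomial (Bool × Sym2 V) K :=
  ∏ e ∈ (Set.toFinite G.edgeSet).toFinset,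
    if IsCutEdge A e then X (true, e) else X (false, e)

lemma cutMonomial_compl {V : Type} [Finite V] (G : SimpleGraph V) (A : Set V) :
    cutMonomial K G Aᶜ = cutMonomial K G A := by
  unfold cutMonomial
  refine Finset.prod_congr rfl fun e _ => ?_
  by_cases h : IsCutEdge A e
  · rw [if_pos ((isCutEdge_compl A e).mpr h), if_pos h]
  · rw [if_neg fun hc => h ((isCutEdge_compl A e).mp hc), if_neg h]

/-- The `K`-algebra homomorphism `φ_G : S_G → R_G`, `q_{A|Aᶜ} ↦ u_A`. -/
def phi {V : Type} [Finite V] (G : SimpleGraph V) :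
    MvPolynomial (Partition V) K →ₐ[K] MvPolynomial (Bool × Sym2 V) K :=
  aeval fun p : Partition V =>
    Quotient.lift (cutMonomial K G)
      (fun A B hAB => by
        have h : B = A ∨ B = Aᶜ := hAB
        rcases h with rfl | rfl
        · rfl
        · exact (cutMonomial_compl K G A).symm) p

/-- The cut ideal `I_G = ker φ_G`. -/
def cutIdeal {V : Type} [Finite V] (G : SimpleGraph V) :
    Ideal (MvPolynomial (Partition V) K) :=
  RingHom.ker (phi K G)

/-- The cut algebra `K[G]`, i.e. the image of `φ_G`: the `K`-subalgebra of `R_G`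
generated by the monomials `u_A`. -/
def cutAlgebra {V : Type} [Finite V] (G : SimpleGraph V) :
    Subalgebra K (MvPolynomial (Bool × Sym2 V) K) :=
  Algebra.adjoin K {m | ∃ A : Set V, m = cutMonomial K G A}

/-- The generator `u_A` of the cut algebra, as an element of the cut algebra. -/
def uGen {V : Type} [Finite V] (G : SimpleGraph V) (A : Set V) : ↥(cutAlgebra K G) :=
  ⟨cutMonomial K G A, Algebra.subset_adjoin ⟨A, rfl⟩⟩

/-- An element of `S_G/I` is homogeneous of degree `d` if it is the class of a homogeneous
polynomial of degree `d`. -/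
def QuotHomogeneous {σ : Type} (I : Ideal (MvPolynomial σ K)) (d : ℕ)
    (x : MvPolynomial σ K ⧸ I) : Prop :=
  ∃ f : MvPolynomial σ K, f.IsHomogeneous d ∧ Ideal.Quotient.mk I f = x

/-- The cut algebra of `H` is an algebra retract of the cut algebra of `G`:
there are homogeneous `K`-algebra homomorphisms `ι : K[H] → K[G]` (injective) and
`π : K[G] → K[H]` with `π ∘ ι = id`. -/
def CutAlgebraRetract {V W : Type} [Finite V] [Finite W]
    (H : SimpleGraph W) (G : SimpleGraph V) : Prop :=
  ∃ (ι : (MvPolynomial (Partition W) K ⧸ cutIdeal K H) →ₐ[K]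
      (MvPolynomial (Partition V) K ⧸ cutIdeal K G))
    (π : (MvPolynomial (Partition V) K ⧸ cutIdeal K G) →ₐ[K]
      (MvPolynomial (Partition W) K ⧸ cutIdeal K H)),
    Function.Injective ι ∧
    (∀ d x, QuotHomogeneous K (cutIdeal K H) d x →
      ∃ d', QuotHomogeneous K (cutIdeal K G) d' (ι x)) ∧
    (∀ d x, QuotHomogeneous K (cutIdeal K G) d x →
      ∃ d', QuotHomogeneous K (cutIdeal K H) d' (π x)) ∧
    π.comp ι = AlgHom.id K _

/-- The graph obtained from `G` by contracting the edge `{u, v}`: the vertex `u` is removed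
and merged into `v`. -/
def contractEdge {V : Type} (G : SimpleGraph V) (u v : V) :
    SimpleGraph {x : V // x ≠ u} where
  Adj a b := a ≠ b ∧
    (G.Adj a b ∨ ((a : V) = v ∧ G.Adj u b) ∨ ((b : V) = v ∧ G.Adj a u))
  symm := by
    constructor
    rintro a b ⟨hne, h | ⟨ha, h⟩ | ⟨hb, h⟩⟩
    · exact ⟨hne.symm, Or.inl h.symm⟩
    · exact ⟨hne.symm, Or.inr (Or.inr ⟨ha, h.symm⟩)⟩
    · exact ⟨hne.symm, Or.inr (Or.inl ⟨hb, h.symm⟩)⟩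
  loopless := ⟨fun a h => h.1 rfl⟩

/-- The induced subgraph `G_W` is a neighborhood-minor of `G`: `W` and `W' = Wᶜ` are nonempty
and there is a vertex `v ∈ W` with `W ∩ N_G(W') ⊆ N_{G_W}[v]`. -/
def IsNeighborhoodMinor {V : Type} (G : SimpleGraph V) (W : Set V) : Prop :=
  W.Nonempty ∧ Wᶜ.Nonempty ∧
    ∃ v ∈ W, ∀ x ∈ W, (∃ y ∈ Wᶜ, G.Adj y x) → x = v ∨ G.Adj v x

/-- The cut vector `δ_A ∈ {0,1}^E` of the partition `A | Aᶜ`. -/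
def cutVector {V : Type} (G : SimpleGraph V) (A : Set V) : ↥G.edgeSet → ℝ :=
  fun e => if IsCutEdge A (e : Sym2 V) then 1 else 0

/-- The cut polytope `Cut^□(G) ⊆ ℝ^E`: the convex hull of the cut vectors. -/
def cutPolytope {V : Type} (G : SimpleGraph V) : Set (↥G.edgeSet → ℝ) :=
  convexHull ℝ {x | ∃ A : Set V, x = cutVector G A}

/-- `F` is a face of `P`: either a trivial face (`P` or `∅`), or the intersection of `P`
with a supporting hyperplane. -/
def IsFace {α : Type} (P F : Set (α → ℝ)) : Prop :=
  F = P ∨ F = ∅ ∨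
    ∃ (φ : (α → ℝ) →ₗ[ℝ] ℝ) (c : ℝ), φ ≠ 0 ∧
      (∀ x ∈ P, φ x ≤ c) ∧ F = P ∩ {x | φ x = c}

/-- `P` and `Q` are affinely isomorphic: there is a bijective map from `P` onto `Q`
extending to an affine map. -/
def AffinelyIsomorphic {α β : Type} (P : Set (α → ℝ)) (Q : Set (β → ℝ)) : Prop :=
  ∃ f : (α → ℝ) →ᵃ[ℝ] (β → ℝ), Set.InjOn f P ∧ f '' P = Q

/-- The monomial `z · ∏_{e ∈ Cut(A)} y_e` of the polytopal algebra of the cut polytope;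
the variable `z` is `X none` and `y_e` is `X (some e)`. -/
def polytopeMonomial {V : Type} [Finite V] (G : SimpleGraph V) (A : Set V) :
    MvPolynomial (Option (Sym2 V)) K :=
  X none * ∏ e ∈ (Set.toFinite (cutSet G A)).toFinset, X (some e)

/-- The polytopal algebra `K[Cut^□(G)]`: the subalgebra of `K[y_e (e ∈ E), z]` generated by
the monomials `z · y^{δ_A}` attached to the lattice points (= cut vectors) of `Cut^□(G)`. -/
def polytopalAlgebra {V : Type} [Finite V] (G : SimpleGraph V) :
    Subalgebra K (MvPolynomial (Option (Sym2 V)) K) :=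
  Algebra.adjoin K {m | ∃ A : Set V, m = polytopeMonomial K G A}

/-- `G'` is a combinatorial retract of `G`: it is obtained from `G` by a finite sequence of
edge contractions and neighborhood-minors. -/
inductive CombinatorialRetract : ∀ {V W : Type}, SimpleGraph V → SimpleGraph W → Prop
  | refl {V : Type} (G : SimpleGraph V) : CombinatorialRetract G G
  | contract {V W : Type} (G : SimpleGraph V) (u v : V) (huv : G.Adj u v)
      (G' : SimpleGraph W) (h : CombinatorialRetract (contractEdge G u v) G') :
      CombinatorialRetract G G'
  | nbhdMinor {V W : Type} (G : SimpleGraph V) (S : Set V)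
      (hS : IsNeighborhoodMinor G S) (G' : SimpleGraph W)
      (h : CombinatorialRetract (SimpleGraph.induce S G) G') :
      CombinatorialRetract G G'

/-! If `G` has a non-edge `xy`, then `u_x u_y = u_∅ u_{xy}`, and for distinct vertices `a, b, c`
the even and odd subsets of `{a, b, c}` give `u_∅ u_{ab} u_{ac} u_{bc} = u_a u_b u_c u_{abc}`.
The trivial partition `∅ | V` occurs on one side only (for the second relation as soon as there
is a fourth vertex), so the corresponding binomial is a nonzero element of `I_G`; hence `I_G = 0`
forces `G` to be complete on at most three vertices.

Conversely `φ_G` is a monomial map, injective as soon as the exponent vectors `δ_A` of the `u_A`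
are `ℕ`-linearly independent. Pairing `δ_A` with `δ_B` counts the edges not cut by `A ∆ B`; for
`K_2` and `K_3` this is `|E|` if `A | Aᶜ = B | Bᶜ` and `|V| - 2` otherwise, and a Gram matrix of
the form `a J + (c - a) I` with `a < c` (`J` the all-ones matrix) is nonsingular. -/

end CutPaper

namespace MvPolynomial

variable {σ τ R : Type} [CommSemiring R]

theorem aeval_monomial_one_eq_mapDomain (D : σ → τ →₀ ℕ) (f : MvPolynomial σ R) :
    aeval (fun i => monomial (D i) (1 : R)) f =
      AddMonoidAlgebra.mapDomain (Finsupp.linearCombination ℕ D) f := by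
  induction f using MvPolynomial.induction_on' with
  | monomial m a =>
    rw [aeval_monomial, ← single_eq_monomial, AddMonoidAlgebra.mapDomain_single,
      single_eq_monomial, Finsupp.linearCombination_apply, monomial_finsupp_sum_index,
      algebraMap_eq]
    simp only [monomial_pow, one_pow]
  | add p q hp hq => rw [map_add, hp, hq, AddMonoidAlgebra.mapDomain_add]

theorem aeval_monomial_one_injective {D : σ → τ →₀ ℕ}
    (hD : Function.Injective (Finsupp.linearCombination ℕ D)) :
    Function.Injective (aeval (R := R) fun i => monomial (D i) (1 : R)) := by
  intro f g h
  simp only [aeval_monomial_one_eq_mapDomain] at h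
  exact AddMonoidAlgebra.mapDomain_injective hD h

end MvPolynomial

theorem Finsupp.linearCombination_injective_of_pairing {ι τ : Type} [Fintype ι]
    [DecidableEq ι] (D : ι → τ →₀ ℕ) (f : ι → (τ →₀ ℕ) →+ ℕ) {a c : ℕ} (hac : a < c)
    (hf : ∀ i j, f j (D i) = if i = j then c else a) :
    Function.Injective (Finsupp.linearCombination ℕ D) := by
  have pairing : ∀ m j, f j (linearCombination ℕ D m) + a * m j = a * ∑ i, m i + c * m j := by
    intro m j
    rw [linearCombination_apply, Finsupp.sum_fintype _ _ fun _ => zero_smul ℕ (D _)]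
    simp only [map_sum, map_nsmul, hf, smul_eq_mul]
    rw [← Finset.add_sum_erase _ _ (Finset.mem_univ j),
      ← Finset.add_sum_erase _ _ (Finset.mem_univ j),
      Finset.sum_congr rfl fun i hi => by rw [if_neg (Finset.ne_of_mem_erase hi)], if_pos rfl,
      ← Finset.sum_mul]
    ring
  have hca : (0 : ℤ) < c - a := by omega
  intro m m' h
  have hsum : ∑ i, m i = ∑ i, m' i := by
    have h1 := Finset.sum_congr rfl fun j (_ : j ∈ Finset.univ) => pairing m j
    have h2 := Finset.sum_congr rfl fun j (_ : j ∈ Finset.univ) => pairing m' j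
    simp only [Finset.sum_add_distrib, ← Finset.mul_sum, h, Finset.sum_const, Finset.card_univ,
      smul_eq_mul] at h1 h2
    zify at h1 h2
    have : ((a : ℤ) * Fintype.card ι + (c - a)) * ∑ i, (m i : ℤ) =
        (a * Fintype.card ι + (c - a)) * ∑ i, (m' i : ℤ) := by
      linear_combination h2 - h1
    exact_mod_cast mul_left_cancel₀ (by positivity) this
  ext j
  have h1 := pairing m j
  have h2 := pairing m' j
  rw [h, hsum] at h1
  zify at h1 h2
  have : ((c : ℤ) - a) * m j = (c - a) * m' j := by linear_combination h2 - h1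
  exact_mod_cast mul_left_cancel₀ hca.ne' this

namespace CutPaper

open MvPolynomial Finset

variable {V : Type}

theorem isCutEdge_mk_iff (A : Set V) (u v : V) :
    IsCutEdge A s(u, v) ↔ ¬(u ∈ A ↔ v ∈ A) := by
  constructor
  · rintro ⟨x, y, h, hx, hy⟩
    rcases Sym2.eq_iff.mp h with ⟨rfl, rfl⟩ | ⟨rfl, rfl⟩ <;> tauto
  · intro h
    by_cases hu : u ∈ A
    · exact ⟨u, v, rfl, hu, by tauto⟩
    · exact ⟨v, u, Sym2.eq_swap, by tauto, hu⟩

theorem isCutEdge_symmDiff (A B : Set V) (e : Sym2 V) :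
    IsCutEdge (symmDiff A B) e ↔ ¬(IsCutEdge A e ↔ IsCutEdge B e) := by
  induction e using Sym2.ind with
  | _ u v => simp only [isCutEdge_mk_iff, Set.mem_symmDiff]; tauto

theorem mk_ne_mk_empty {B : Set V} (hB : B.Nonempty) (hBc : Bᶜ.Nonempty) :
    (Quotient.mk (partitionSetoid V) B) ≠ Quotient.mk _ ∅ := by
  intro h
  rcases Quotient.exact h with h | h
  · exact hB.ne_empty h.symm
  · exact hBc.ne_empty h.symm

theorem mk_eq_mk_iff_symmDiff_trivial {A B : Set V} :
    (Quotient.mk (partitionSetoid V) A) = Quotient.mk _ B ↔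
      symmDiff A B = ∅ ∨ symmDiff A B = Set.univ := by
  rw [Quotient.eq, ← Set.bot_eq_empty, ← Set.top_eq_univ, symmDiff_eq_bot, symmDiff_eq_top,
    isCompl_comm, ← eq_compl_iff_isCompl, eq_comm]
  exact Iff.rfl

section Relations

variable [Finite V] (K : Type) [CommRing K] (G : SimpleGraph V)

theorem phi_qPart (A : Set V) : phi K G (qPart K A) = cutMonomial K G A :=
  aeval_X _ _

theorem cutIdeal_ne_bot_of_relation [Nontrivial K] (s t : Multiset (Set V))
    (hrel : (s.map (cutMonomial K G)).prod = (t.map (cutMonomial K G)).prod) (hs : ∅ ∈ s)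
    (ht : ∀ B ∈ t, B.Nonempty ∧ Bᶜ.Nonempty) : cutIdeal K G ≠ ⊥ := by
  intro hbot
  have hmem : (s.map (qPart K)).prod - (t.map (qPart K)).prod ∈ cutIdeal K G := by
    rw [cutIdeal, RingHom.mem_ker, map_sub, map_multiset_prod, map_multiset_prod,
      Multiset.map_map, Multiset.map_map]
    simp only [Function.comp_def, phi_qPart, hrel, sub_self]
  rw [hbot, Ideal.mem_bot, sub_eq_zero] at hmem
  -- at this point only the variable of the trivial partition `∅ | V` vanishes
  have heval := congrArg (eval fun p => if p = Quotient.mk _ ∅ then (0 : K) else 1) hmem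
  simp only [map_multiset_prod, Multiset.map_map, Function.comp_def, qPart, eval_X] at heval
  rw [Multiset.prod_eq_zero (Multiset.mem_map.mpr ⟨∅, hs, if_pos rfl⟩ : (0 : K) ∈ _),
    Multiset.prod_eq_one] at heval
  · exact zero_ne_one heval
  · simp only [Multiset.mem_map]
    rintro _ ⟨B, hB, rfl⟩
    exact if_neg (mk_ne_mk_empty (ht B hB).1 (ht B hB).2)

theorem cutMonomial_singleton_mul_singleton {x y : V} (hxy : x ≠ y) (hadj : ¬G.Adj x y) :
    cutMonomial K G {x} * cutMonomial K G {y} =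
      cutMonomial K G ∅ * cutMonomial K G {x, y} := by
  simp only [cutMonomial, ← Finset.prod_mul_distrib]
  refine Finset.prod_congr rfl fun e he => ?_
  rw [Set.Finite.mem_toFinset] at he
  induction e using Sym2.ind with
  | _ u v =>
    have hne : ¬(u = x ∧ v = y) := by rintro ⟨rfl, rfl⟩; exact hadj he
    have hne' : ¬(u = y ∧ v = x) := by rintro ⟨rfl, rfl⟩; exact hadj (G.adj_symm he)
    simp only [isCutEdge_mk_iff, Set.mem_singleton_iff, Set.mem_insert_iff,
      Set.mem_empty_iff_false]
    by_cases hux : u = x <;> by_cases huy : u = y <;> by_cases hvx : v = x <;>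
      by_cases hvy : v = y <;> simp_all <;> ring

theorem cutMonomial_prod_even_eq_prod_odd {a b c : V} (hab : a ≠ b) (hac : a ≠ c)
    (hbc : b ≠ c) :
    cutMonomial K G ∅ * cutMonomial K G {a, b} * cutMonomial K G {a, c} *
        cutMonomial K G {b, c} =
      cutMonomial K G {a} * cutMonomial K G {b} * cutMonomial K G {c} *
        cutMonomial K G {a, b, c} := by
  simp only [cutMonomial, ← Finset.prod_mul_distrib]
  refine Finset.prod_congr rfl fun e _ => ?_
  induction e using Sym2.ind with
  | _ u v =>
    simp only [isCutEdge_mk_iff, Set.mem_singleton_iff, Set.mem_insert_iff,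
      Set.mem_empty_iff_false]
    by_cases hua : u = a <;> by_cases hub : u = b <;> by_cases huc : u = c <;>
      by_cases hva : v = a <;> by_cases hvb : v = b <;> by_cases hvc : v = c <;>
      simp_all <;> ring

theorem cutIdeal_ne_bot_of_not_adj [Nontrivial K] {x y : V} (hxy : x ≠ y) (hadj : ¬G.Adj x y) :
    cutIdeal K G ≠ ⊥ := by
  refine cutIdeal_ne_bot_of_relation K G {∅, {x, y}} {{x}, {y}} ?_ (by simp) ?_
  · simpa using (cutMonomial_singleton_mul_singleton K G hxy hadj).symm
  · simp only [Multiset.insert_eq_cons, Multiset.mem_cons, Multiset.mem_singleton]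
    rintro B (rfl | rfl)
    exacts [⟨⟨x, rfl⟩, ⟨y, hxy.symm⟩⟩, ⟨⟨y, rfl⟩, ⟨x, hxy⟩⟩]

theorem cutIdeal_ne_bot_of_three [Nontrivial K] {a b c : V} (hab : a ≠ b) (hac : a ≠ c)
    (hbc : b ≠ c) (hd : ({a, b, c} : Set V)ᶜ.Nonempty) : cutIdeal K G ≠ ⊥ := by
  refine cutIdeal_ne_bot_of_relation K G {∅, {a, b}, {a, c}, {b, c}} {{a}, {b}, {c}, {a, b, c}}
    ?_ (by simp) ?_
  · simpa [mul_assoc] using cutMonomial_prod_even_eq_prod_odd K G hab hac hbc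
  · simp only [Multiset.insert_eq_cons, Multiset.mem_cons, Multiset.mem_singleton]
    rintro B (rfl | rfl | rfl | rfl)
    exacts [⟨⟨a, rfl⟩, ⟨b, hab.symm⟩⟩, ⟨⟨b, rfl⟩, ⟨a, hab⟩⟩, ⟨⟨c, rfl⟩, ⟨a, hac⟩⟩,
      ⟨⟨a, by simp⟩, hd⟩]

end Relations

section Pairing

variable [Finite V] (G : SimpleGraph V)

def cutExponent (A : Set V) : Bool × Sym2 V →₀ ℕ :=
  ∑ e ∈ (Set.toFinite G.edgeSet).toFinset, Finsupp.single (decide (IsCutEdge A e), e) 1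

theorem cutMonomial_eq_monomial (K : Type) [CommRing K] (A : Set V) :
    cutMonomial K G A = monomial (cutExponent G A) (1 : K) := by
  rw [cutMonomial, cutExponent, monomial_sum_one]
  refine Finset.prod_congr rfl fun e _ => ?_
  split_ifs with h <;> simp [h, X]

theorem phi_eq_aeval (K : Type) [CommRing K] :
    phi K G = aeval fun p : Partition V => monomial (cutExponent G p.out) (1 : K) := by
  ext p : 1
  rw [aeval_X, ← cutMonomial_eq_monomial, ← phi_qPart, qPart, Quotient.out_eq]

def cutPairing (B : Set V) : (Bool × Sym2 V →₀ ℕ) →+ ℕ :=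
  ∑ e ∈ (Set.toFinite G.edgeSet).toFinset, Finsupp.applyAddHom (decide (IsCutEdge B e), e)

theorem cutPairing_cutExponent (A B : Set V) :
    cutPairing G B (cutExponent G A) =
      #{e ∈ (Set.toFinite G.edgeSet).toFinset | ¬IsCutEdge (symmDiff A B) e} := by
  simp only [cutPairing, cutExponent, AddMonoidHom.finsetSum_apply, Finsupp.applyAddHom_apply,
    Finsupp.finsetSum_apply, Finsupp.single_apply, Prod.mk.injEq, isCutEdge_symmDiff,
    Finset.card_filter, decide_eq_decide, not_not]
  refine Finset.sum_congr rfl fun e he => ?_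
  simp only [and_comm (a := _ ↔ _)]
  rw [Finset.sum_eq_single_of_mem e he fun x _ hx => if_neg fun h => hx h.1]
  simp only [true_and]

end Pairing

section CompleteGraph

variable [Fintype V]

theorem card_cutEdges_top (C : Set V) :
    #{e ∈ (Set.toFinite (⊤ : SimpleGraph V).edgeSet).toFinset | IsCutEdge C e} =
      #C.toFinset * #Cᶜ.toFinset := by
  rw [← Finset.card_product]
  symm
  refine Finset.card_nbij (fun x => s(x.1, x.2)) ?_ ?_ ?_
  · rintro ⟨u, v⟩ huv
    simp only [Finset.coe_product, Set.coe_toFinset, Set.mem_prod, Set.mem_compl_iff] at huv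
    simp only [Finset.coe_filter, Set.Finite.mem_toFinset, SimpleGraph.mem_edgeSet,
      SimpleGraph.top_adj, isCutEdge_mk_iff, Set.mem_ofPred_eq]
    exact ⟨fun h => huv.2 (h ▸ huv.1), by tauto⟩
  · rintro ⟨u, v⟩ huv ⟨u', v'⟩ huv' h
    simp only [Finset.coe_product, Set.coe_toFinset, Set.mem_prod, Set.mem_compl_iff] at huv huv'
    rcases Sym2.eq_iff.mp h with ⟨rfl, rfl⟩ | ⟨rfl, rfl⟩
    · rfl
    · exact absurd huv.1 huv'.2
  · intro e he
    induction e using Sym2.ind with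
    | _ u v =>
      simp only [Finset.coe_filter, Set.Finite.mem_toFinset, Set.mem_ofPred_eq,
        isCutEdge_mk_iff] at he
      simp only [Finset.coe_product, Set.coe_toFinset]
      by_cases hu : u ∈ C
      · exact ⟨(u, v), by tauto, rfl⟩
      · exact ⟨(v, u), by tauto, Sym2.eq_swap⟩

theorem card_uncutEdges_top (hn : Fintype.card V = 2 ∨ Fintype.card V = 3) (C : Set V) :
    #{e ∈ (Set.toFinite (⊤ : SimpleGraph V).edgeSet).toFinset | ¬IsCutEdge C e} =
      if C = ∅ ∨ C = Set.univ then (Fintype.card V).choose 2 else Fintype.card V - 2 := by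
  have htotal : #(Set.toFinite (⊤ : SimpleGraph V).edgeSet).toFinset =
      (Fintype.card V).choose 2 := by
    rw [Set.Finite.toFinset_eq_toFinset]
    exact SimpleGraph.card_edgeFinset_top_eq_card_choose_two
  split_ifs with hC
  · rw [Finset.filter_true_of_mem, htotal]
    rintro _ - ⟨u, v, -, hu, hv⟩
    rcases hC with rfl | rfl
    exacts [hu, hv trivial]
  · have hsplit := Finset.card_filter_add_card_filter_not (IsCutEdge C)
      (s := (Set.toFinite (⊤ : SimpleGraph V).edgeSet).toFinset)
    rw [card_cutEdges_top, Set.toFinset_compl, Finset.card_compl, htotal] at hsplit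
    rw [not_or] at hC
    have hpos : 0 < #C.toFinset :=
      Finset.card_pos.mpr (Set.toFinset_nonempty.mpr (Set.nonempty_iff_ne_empty.mpr hC.1))
    have hlt : #C.toFinset < Fintype.card V := by
      rw [← Finset.card_univ]
      exact Finset.card_lt_card (by simpa [Finset.ssubset_univ_iff] using hC.2)
    rcases hn with hn | hn <;> simp only [hn, Nat.choose_two_right] at hsplit hlt ⊢ <;>
      interval_cases #C.toFinset <;> omega

theorem cutPairing_top_cutExponent (hn : Fintype.card V = 2 ∨ Fintype.card V = 3)
    (p q : Partition V) :
    cutPairing ⊤ q.out (cutExponent ⊤ p.out) =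
      if p = q then (Fintype.card V).choose 2 else Fintype.card V - 2 := by
  simp only [cutPairing_cutExponent, card_uncutEdges_top hn, ← mk_eq_mk_iff_symmDiff_trivial,
    Quotient.out_eq]

theorem cutIdeal_top_eq_bot (K : Type) [CommRing K]
    (hn : Fintype.card V = 2 ∨ Fintype.card V = 3) : cutIdeal K (⊤ : SimpleGraph V) = ⊥ := by
  rw [cutIdeal, phi_eq_aeval, ← RingHom.injective_iff_ker_eq_bot]
  refine aeval_monomial_one_injective
    (Finsupp.linearCombination_injective_of_pairing _ _ ?_ (cutPairing_top_cutExponent hn))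
  rcases hn with hn | hn <;> simp [hn]

end CompleteGraph

theorem stmt0_general {V : Type} [Fintype V] (K : Type) [Field K]
    (G : SimpleGraph V) (hE : G.edgeSet.Nonempty) :
    cutIdeal K G = ⊥ ↔
      G = ⊤ ∧ (Fintype.card V = 2 ∨ Fintype.card V = 3) := by
  constructor
  · intro hbot
    have htop : G = ⊤ := by
      ext x y
      exact ⟨SimpleGraph.Adj.ne,
        fun hxy => by_contra fun hadj => cutIdeal_ne_bot_of_not_adj K G hxy hadj hbot⟩
    obtain ⟨⟨u, v⟩, huv⟩ := hE
    have hcard2 : 2 ≤ Fintype.card V := Fintype.one_lt_card_iff.mpr ⟨u, v, G.ne_of_adj huv⟩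
    have hcard3 : Fintype.card V ≤ 3 := by
      by_contra! h
      obtain ⟨a, b, c, hab, hac, hbc⟩ := (Fintype.two_lt_card_iff (α := V)).mp (by omega)
      obtain ⟨d, -, hd⟩ := Finset.exists_mem_notMem_of_card_lt_card
        (s := {a, b, c}) (t := Finset.univ) ((Finset.card_le_three).trans_lt h)
      exact cutIdeal_ne_bot_of_three K G hab hac hbc ⟨d, by simpa using hd⟩ hbot
    exact ⟨htop, by omega⟩
  · rintro ⟨rfl, hn⟩
    exact cutIdeal_top_eq_bot K hn

theorem stmt0 {V : Type} [Fintype V] [Nonempty V] (K : Type) [Field K]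
    (G : SimpleGraph V) (hE : G.edgeSet.Nonempty) :
    cutIdeal K G = ⊥ ↔
      G = ⊤ ∧ (Fintype.card V = 2 ∨ Fintype.card V = 3) :=
  stmt0_general K G hE

end CutPaper
end
end

section
/- Let G=(V,E) be a finite simple graph and let G' be a graph obtained from G by contracting an edge e ∈ E. Then the cut polytope Cut^□(G') is affinely isomorphic to a face of the cut polytope Cut^□(G); in fact Cut^□(G) ∩ {x ∈ ℝ^E : x_e = 0} is such a face, and there is a bijective affine map from Cut^□(G') onto it. -/
open scoped Classical

noncomputable section

namespace CutPaper

open MvPolynomial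

variable (K : Type) [CommRing K]

lemma isCutEdge_pair {V : Type} {A : Set V} {a b : V} :
    IsCutEdge A s(a, b) ↔ (a ∈ A ∧ b ∉ A) ∨ (b ∈ A ∧ a ∉ A) := by
  constructor
  · rintro ⟨p, q, heq, hp, hq⟩
    rw [Sym2.eq_iff] at heq
    rcases heq with ⟨rfl, rfl⟩ | ⟨rfl, rfl⟩
    · exact Or.inl ⟨hp, hq⟩
    · exact Or.inr ⟨hp, hq⟩
  · rintro (⟨h1, h2⟩ | ⟨h1, h2⟩)
    · exact ⟨a, b, rfl, h1, h2⟩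
    · exact ⟨b, a, Sym2.eq_swap, h1, h2⟩

section Contract

variable {V : Type} (G : SimpleGraph V) (u v : V) (huv : G.Adj u v)

/-- The map sending `u` to `v` and every other vertex to itself. -/
def cmap : V → {x : V // x ≠ u} := fun x =>
  if hx : x = u then ⟨v, (G.ne_of_adj huv).symm⟩ else ⟨x, hx⟩

lemma cmap_u : cmap G u v huv u = ⟨v, (G.ne_of_adj huv).symm⟩ := dif_pos rfl

lemma cmap_ne {x : V} (hx : x ≠ u) : cmap G u v huv x = ⟨x, hx⟩ := dif_neg hx

lemma cmap_u_eq_cmap_v : cmap G u v huv u = cmap G u v huv v := by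
  rw [cmap_u, cmap_ne G u v huv (G.ne_of_adj huv).symm]

lemma isCutEdge_cmap (A : Set {x : V // x ≠ u}) (e : Sym2 V) :
    IsCutEdge (cmap G u v huv ⁻¹' A) e ↔ IsCutEdge A (Sym2.map (cmap G u v huv) e) := by
  induction e using Sym2.ind with
  | _ a b => rw [Sym2.map_pair_eq, isCutEdge_pair, isCutEdge_pair]; rfl

lemma edge_map_mem {e : Sym2 V} (he : e ∈ G.edgeSet) (hne : e ≠ s(u, v)) :
    Sym2.map (cmap G u v huv) e ∈ (contractEdge G u v).edgeSet := by
  induction e using Sym2.ind with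
  | _ a b =>
    rw [SimpleGraph.mem_edgeSet] at he
    rw [Sym2.map_pair_eq, SimpleGraph.mem_edgeSet]
    by_cases ha : a = u
    · have he' : G.Adj u b := ha ▸ he
      have hbu : b ≠ u := fun h => G.loopless.irrefl u (h ▸ he')
      have hbv : b ≠ v := fun h => hne (by rw [ha, h])
      rw [ha, cmap_u, cmap_ne G u v huv hbu]
      exact And.intro (fun h => hbv (congrArg Subtype.val h).symm) (Or.inr (Or.inl ⟨rfl, he'⟩))
    · by_cases hb : b = u
      · have he' : G.Adj a u := hb ▸ he
        have hav : a ≠ v := fun h => hne (by rw [hb, h, Sym2.eq_swap])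
        rw [hb, cmap_u, cmap_ne G u v huv ha]
        exact And.intro (fun h => hav (congrArg Subtype.val h)) (Or.inr (Or.inr ⟨rfl, he'⟩))
      · rw [cmap_ne G u v huv ha, cmap_ne G u v huv hb]
        exact And.intro (fun h => (G.ne_of_adj he) (congrArg Subtype.val h)) (Or.inl he)

lemma edge_map_surj {e' : Sym2 {x : V // x ≠ u}} (he : e' ∈ (contractEdge G u v).edgeSet) :
    ∃ e ∈ G.edgeSet, e ≠ s(u, v) ∧ Sym2.map (cmap G u v huv) e = e' := by
  induction e' using Sym2.ind with
  | _ a b =>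
    rw [SimpleGraph.mem_edgeSet] at he
    obtain ⟨hab, hadj | ⟨hav, hadj⟩ | ⟨hbv, hadj⟩⟩ := (he : _ ∧ _)
    · refine ⟨s((a : V), (b : V)), hadj, ?_, ?_⟩
      · intro h
        rw [Sym2.eq_iff] at h
        rcases h with ⟨h1, _⟩ | ⟨_, h2⟩
        · exact a.2 h1
        · exact b.2 h2
      · rw [Sym2.map_pair_eq, cmap_ne G u v huv a.2, cmap_ne G u v huv b.2]
    · refine ⟨s(u, (b : V)), hadj, ?_, ?_⟩
      · intro h
        rw [Sym2.eq_iff] at h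
        rcases h with ⟨_, h2⟩ | ⟨h1, _⟩
        · exact hab (Subtype.ext (hav.trans h2.symm))
        · exact G.ne_of_adj huv h1
      · rw [Sym2.map_pair_eq, cmap_ne G u v huv b.2]
        have : cmap G u v huv u = a := by
          simp only [cmap, dif_pos rfl]; exact Subtype.ext hav.symm
        rw [this]
    · refine ⟨s((a : V), u), hadj, ?_, ?_⟩
      · intro h
        rw [Sym2.eq_iff] at h
        rcases h with ⟨h1, _⟩ | ⟨h1, _⟩
        · exact a.2 h1
        · exact hab (Subtype.ext (h1.trans hbv.symm))
      · rw [Sym2.map_pair_eq, cmap_ne G u v huv a.2]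
        have : cmap G u v huv u = b := by
          simp only [cmap, dif_pos rfl]; exact Subtype.ext hbv.symm
        rw [this]

/-- The linear embedding of `ℝ^{E(G')}` into `ℝ^{E(G)}` (zero on the contracted edge). -/
def cproj : (↥(contractEdge G u v).edgeSet → ℝ) →ₗ[ℝ] (↥G.edgeSet → ℝ) where
  toFun y := fun e =>
    if h2 : (e : Sym2 V) = s(u, v) then 0
    else y ⟨Sym2.map (cmap G u v huv) e, edge_map_mem G u v huv e.2 h2⟩
  map_add' y z := by funext e; split <;> simp [*]
  map_smul' c y := by funext e; split <;> simp [*]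

lemma not_isCutEdge_preimage (A : Set {x : V // x ≠ u}) :
    ¬ IsCutEdge (cmap G u v huv ⁻¹' A) s(u, v) := by
  rw [isCutEdge_pair]
  have hc := cmap_u_eq_cmap_v G u v huv
  simp only [Set.mem_preimage, hc]
  tauto

lemma cproj_cutVector (A : Set {x : V // x ≠ u}) :
    cproj G u v huv (cutVector (contractEdge G u v) A)
      = cutVector G (cmap G u v huv ⁻¹' A) := by
  funext e
  show (if h2 : (e : Sym2 V) = s(u, v) then (0 : ℝ)
    else cutVector (contractEdge G u v) A
      ⟨Sym2.map (cmap G u v huv) e, edge_map_mem G u v huv e.2 h2⟩) = _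
  split
  · next h2 =>
    unfold cutVector
    rw [h2, if_neg (not_isCutEdge_preimage G u v huv A)]
  · next h2 =>
    unfold cutVector
    rw [← isCutEdge_cmap G u v huv A]

lemma preimage_cmap_val (A : Set V) (hA : u ∈ A ↔ v ∈ A) :
    cmap G u v huv ⁻¹' (Subtype.val ⁻¹' A) = A := by
  ext x
  simp only [Set.mem_preimage]
  by_cases hx : x = u
  · subst hx
    simp only [cmap, dif_pos rfl]
    exact hA.symm
  · rw [cmap_ne G u v huv hx]

end Contract

theorem stmt2 {V : Type} [Fintype V] (G : SimpleGraph V) (u v : V) (huv : G.Adj u v) :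
    IsFace (cutPolytope G)
      (cutPolytope G ∩ {x | x ⟨s(u, v), G.mem_edgeSet.mpr huv⟩ = 0}) ∧
    AffinelyIsomorphic (cutPolytope (contractEdge G u v))
      (cutPolytope G ∩ {x | x ⟨s(u, v), G.mem_edgeSet.mpr huv⟩ = 0}) := by
  set e₀ : ↥G.edgeSet := ⟨s(u, v), G.mem_edgeSet.mpr huv⟩ with he₀
  -- every point of the cut polytope has nonnegative `e₀`-coordinate
  have hnonneg : cutPolytope G ⊆ {x | 0 ≤ x e₀} := by
    refine convexHull_min ?_ ?_
    · rintro _ ⟨A, rfl⟩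
      show (0:ℝ) ≤ cutVector G A e₀
      unfold cutVector
      split <;> norm_num
    · exact convex_halfSpace_ge (f := fun x : ↥G.edgeSet → ℝ => x e₀)
        ⟨fun a b => rfl, fun c a => by simp⟩ 0
  constructor
  · -- the face part
    refine Or.inr (Or.inr ⟨-(LinearMap.proj e₀), 0, ?_, ?_, ?_⟩)
    · intro h
      have h1 := congrArg (fun ψ : (↥G.edgeSet → ℝ) →ₗ[ℝ] ℝ => ψ (Pi.single e₀ (1 : ℝ))) h
      simp at h1
    · intro x hx
      simpa using hnonneg hx
    · ext x
      simp [neg_eq_zero]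
  · -- the affine isomorphism part
    refine ⟨(cproj G u v huv).toAffineMap, ?_, ?_⟩
    · -- injectivity
      refine Function.Injective.injOn ?_
      intro y₁ y₂ h
      funext e'
      obtain ⟨e, heG, hene, hmap⟩ := edge_map_surj G u v huv e'.2
      have h2 := congrFun h (⟨e, heG⟩ : ↥G.edgeSet)
      show y₁ e' = y₂ e'
      have hkey : ∀ y : ↥(contractEdge G u v).edgeSet → ℝ,
          (cproj G u v huv).toAffineMap y ⟨e, heG⟩ = y e' := by
        intro y
        show (if h2 : ((⟨e, heG⟩ : ↥G.edgeSet) : Sym2 V) = s(u, v) then (0:ℝ)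
          else y ⟨Sym2.map (cmap G u v huv) e, edge_map_mem G u v huv heG h2⟩) = y e'
        rw [dif_neg hene]
        congr 1
        exact Subtype.ext hmap
      rw [hkey y₁, hkey y₂] at h2
      exact h2
    · -- image
      unfold cutPolytope
      rw [AffineMap.image_convexHull]
      apply Set.Subset.antisymm
      · refine convexHull_min ?_ ?_
        · rintro _ ⟨_, ⟨A, rfl⟩, rfl⟩
          have himg : (cproj G u v huv).toAffineMap (cutVector (contractEdge G u v) A)
              = cutVector G (cmap G u v huv ⁻¹' A) := cproj_cutVector G u v huv A
          rw [himg]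
          constructor
          · exact subset_convexHull ℝ _ ⟨_, rfl⟩
          · show cutVector G (cmap G u v huv ⁻¹' A) e₀ = 0
            unfold cutVector
            exact if_neg (not_isCutEdge_preimage G u v huv A)
        · exact (convex_convexHull ℝ _).inter
            (convex_hyperplane (f := fun x : ↥G.edgeSet → ℝ => x e₀)
              ⟨fun a b => rfl, fun c a => by simp⟩ 0)
      · rintro x ⟨hxP, hx0⟩
        rw [convexHull_eq] at hxP
        obtain ⟨ι, t, w, z, hw₀, hw₁, hz, hx⟩ := hxP
        set t' : Finset ι := {i ∈ t | w i ≠ 0} with ht'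
        have hw₁' : ∑ i ∈ t', w i = 1 := by
          rw [ht', Finset.sum_filter_ne_zero, hw₁]
        have hx' : t'.centerMass w z = x := by
          rw [ht', Finset.centerMass_filter_ne_zero, hx]
        have hxsum : x = ∑ i ∈ t', w i • z i := by
          rw [← hx', Finset.centerMass_eq_of_sum_1 _ _ hw₁']
        have hx0' : ∑ i ∈ t', w i * z i e₀ = 0 := by
          have := congrFun hxsum e₀
          rw [Finset.sum_apply] at this
          simpa using this.symm.trans hx0
        have hz0 : ∀ i ∈ t', z i e₀ = 0 := by
          intro i hi
          have hterm : ∀ j ∈ t', 0 ≤ w j * z j e₀ := by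
            intro j hj
            obtain ⟨Aj, hAj⟩ := hz j (Finset.mem_of_mem_filter j hj)
            refine mul_nonneg (hw₀ j (Finset.mem_of_mem_filter j hj)) ?_
            rw [hAj]; unfold cutVector; split <;> norm_num
          have := (Finset.sum_eq_zero_iff_of_nonneg hterm).mp hx0' i hi
          have hwne : w i ≠ 0 := (Finset.mem_filter.mp hi).2
          exact (mul_eq_zero.mp this).resolve_left hwne
        have hzmem : ∀ i ∈ t', z i ∈
            (cproj G u v huv).toAffineMap '' {y | ∃ A, y = cutVector (contractEdge G u v) A} := by
          intro i hi
          obtain ⟨A, hA⟩ := hz i (Finset.mem_of_mem_filter i hi)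
          have h0 : ¬ IsCutEdge A s(u, v) := by
            intro hcut
            have := hz0 i hi
            rw [hA] at this
            unfold cutVector at this
            rw [if_pos hcut] at this
            norm_num at this
          have hAuv : u ∈ A ↔ v ∈ A := by
            rw [isCutEdge_pair] at h0; tauto
          refine ⟨cutVector (contractEdge G u v) (Subtype.val ⁻¹' A), ⟨_, rfl⟩, ?_⟩
          have himg : (cproj G u v huv).toAffineMap (cutVector (contractEdge G u v) (Subtype.val ⁻¹' A))
              = cutVector G (cmap G u v huv ⁻¹' (Subtype.val ⁻¹' A)) :=
            cproj_cutVector G u v huv _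
          rw [himg, preimage_cmap_val G u v huv A hAuv, ← hA]
        rw [← hx']
        exact Finset.centerMass_mem_convexHull t'
          (fun i hi => hw₀ i (Finset.mem_of_mem_filter i hi))
          (by rw [hw₁']; norm_num) hzmem

end CutPaper
end
end

section
/- Let G=(V,E) be a finite simple graph, K a field, and let u, v ∈ V with u ≠ v and N_G(u) ⊆ N_G[v]. Then the induced subgraph G_{V∖{u}} is a neighborhood-minor of G, and hence K[G_{V∖{u}}] is an algebra retract of K[G]. In particular, if G' is obtained from G by duplicating a vertex v (adding a new vertex v' adjacent exactly to the neighbors of v), then K[G] is an algebra retract of K[G']. -/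
open scoped Classical

noncomputable section

namespace CutPaper

open MvPolynomial

variable (K : Type) [CommRing K]

/-! ### Auxiliary machinery for the retract construction -/

section Retract

open Function

variable {V W : Type}

lemma isCutEdge_mk {A : Set V} {x y : V} :
    IsCutEdge A s(x, y) ↔ (x ∈ A ∧ y ∉ A) ∨ (y ∈ A ∧ x ∉ A) := by
  constructor
  · rintro ⟨a, b, he, ha, hb⟩
    rcases Sym2.eq_iff.mp he with ⟨rfl, rfl⟩ | ⟨rfl, rfl⟩
    · exact Or.inl ⟨ha, hb⟩
    · exact Or.inr ⟨ha, hb⟩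
  · rintro (⟨ha, hb⟩ | ⟨ha, hb⟩)
    · exact ⟨x, y, rfl, ha, hb⟩
    · exact ⟨y, x, Sym2.eq_swap, ha, hb⟩

lemma isCutEdge_map {A : Set V} (j : W → V) (f : Sym2 W) :
    IsCutEdge A (Sym2.map j f) ↔ IsCutEdge (j ⁻¹' A) f := by
  induction f using Sym2.ind with
  | _ a b => simp [Sym2.map_pair_eq, isCutEdge_mk]

lemma map_mem_edgeSet_iff {G : SimpleGraph V} {H : SimpleGraph W} {j : W → V}
    (hadj : ∀ a b, H.Adj a b ↔ G.Adj (j a) (j b)) (f : Sym2 W) :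
    Sym2.map j f ∈ G.edgeSet ↔ f ∈ H.edgeSet := by
  induction f using Sym2.ind with
  | _ a b => simp [Sym2.map_pair_eq, hadj]

/-- Lift a subset of `W` to a subset of `V`, putting everything outside the range of `j`
on the same side as `v`. -/
def liftSet (j : W → V) (v : W) (B : Set W) : Set V :=
  j '' B ∪ (if v ∈ B then (Set.range j)ᶜ else ∅)

lemma mem_liftSet_apply {j : W → V} (hj : Injective j) (v : W) (B : Set W) (a : W) :
    j a ∈ liftSet j v B ↔ a ∈ B := by
  unfold liftSet
  constructor
  · rintro (⟨b, hb, he⟩ | h)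
    · rwa [← hj he]
    · split_ifs at h with hv
      · exact absurd (Set.mem_range_self a) h
      · exact absurd h (Set.notMem_empty _)
  · intro h; exact Or.inl ⟨a, h, rfl⟩

lemma mem_liftSet_notrange {j : W → V} {v : W} {B : Set W} {y : V} (hy : y ∉ Set.range j) :
    y ∈ liftSet j v B ↔ v ∈ B := by
  unfold liftSet
  constructor
  · rintro (⟨b, _, he⟩ | h)
    · exact absurd ⟨b, he⟩ hy
    · split_ifs at h with hv
      · exact hv
      · exact absurd h (Set.notMem_empty _)
  · intro hv
    right
    rw [if_pos hv]
    exact hy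

lemma liftSet_compl {j : W → V} (hj : Injective j) (v : W) (B : Set W) :
    liftSet j v Bᶜ = (liftSet j v B)ᶜ := by
  ext x
  by_cases hx : x ∈ Set.range j
  · obtain ⟨a, rfl⟩ := hx
    simp [mem_liftSet_apply hj]
  · simp [mem_liftSet_notrange hx]

lemma preimage_liftSet {j : W → V} (hj : Injective j) (v : W) (B : Set W) :
    j ⁻¹' liftSet j v B = B := by
  ext a
  simpa using mem_liftSet_apply hj v B a

/-- The map on partitions induced by `A ↦ j ⁻¹' A`. -/
def sigmaP (j : W → V) : Partition V → Partition W :=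
  Quotient.map (fun A => j ⁻¹' A) (by
    rintro A B h
    have h' : B = A ∨ B = Aᶜ := h
    rcases h' with rfl | rfl
    · exact Or.inl rfl
    · exact Or.inr Set.preimage_compl)

/-- The map on partitions induced by `liftSet`. -/
def tauP {j : W → V} (hj : Injective j) (v : W) : Partition W → Partition V :=
  Quotient.map (liftSet j v) (by
    rintro B B' h
    have h' : B' = B ∨ B' = Bᶜ := h
    rcases h' with rfl | rfl
    · exact Or.inl rfl
    · exact Or.inr (liftSet_compl hj v B))

lemma sigmaP_tauP {j : W → V} (hj : Injective j) (v : W) (p : Partition W) :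
    sigmaP j (tauP hj v p) = p := by
  induction p using Quotient.ind with
  | _ B =>
    simp only [sigmaP, tauP, Quotient.map_mk]
    exact congrArg _ (preimage_liftSet hj v B)

variable (K : Type) [Field K]

lemma phi_X [Finite V] (G : SimpleGraph V) (A : Set V) :
    phi K G (X (Quotient.mk (partitionSetoid V) A)) = cutMonomial K G A := by
  simp [phi]

/-- The substitution on the ambient polynomial rings inducing `K[G] → K[H]`. -/
def rhoDown (j : W → V) :
    MvPolynomial (Bool × Sym2 V) K →ₐ[K] MvPolynomial (Bool × Sym2 W) K :=
  aeval fun be => if h : ∃ f : Sym2 W, Sym2.map j f = be.2 then X (be.1, h.choose) else 1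

lemma rhoDown_cutMonomial [Finite V] [Finite W] {G : SimpleGraph V} {H : SimpleGraph W}
    {j : W → V} (hj : Injective j)
    (hadj : ∀ a b, H.Adj a b ↔ G.Adj (j a) (j b)) (A : Set V) :
    rhoDown K j (cutMonomial K G A) = cutMonomial K H (j ⁻¹' A) := by
  unfold cutMonomial
  rw [map_prod]
  have hterm : ∀ e : Sym2 V,
      rhoDown K j (if IsCutEdge A e then (X (true, e) : MvPolynomial (Bool × Sym2 V) K)
        else X (false, e)) =
      if h : ∃ f : Sym2 W, Sym2.map j f = e then
        (if IsCutEdge A e then (X (true, h.choose) : MvPolynomial (Bool × Sym2 W) K)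
          else X (false, h.choose)) else 1 := by
    intro e
    by_cases hc : IsCutEdge A e <;> by_cases hex : ∃ f : Sym2 W, Sym2.map j f = e <;>
      simp [rhoDown, hc, hex]
  rw [Finset.prod_congr rfl fun e _ => hterm e]
  rw [← Finset.prod_filter_of_ne
    (p := fun e => ∃ f : Sym2 W, Sym2.map j f = e)
    (fun e _ hne => by
      by_contra hp
      exact hne (dif_neg hp))]
  refine (Finset.prod_nbij (Sym2.map j) ?_ ?_ ?_ ?_).symm
  · intro f hf
    rw [Set.Finite.mem_toFinset] at hf
    rw [Finset.mem_filter, Set.Finite.mem_toFinset]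
    exact ⟨(map_mem_edgeSet_iff hadj f).mpr hf, ⟨f, rfl⟩⟩
  · exact (Sym2.map.injective hj).injOn
  · intro e he
    simp only [Finset.coe_filter, Set.mem_setOf_eq] at he
    obtain ⟨heG, f, rfl⟩ := he
    rw [Set.Finite.mem_toFinset] at heG
    refine ⟨f, ?_, rfl⟩
    rw [Finset.mem_coe, Set.Finite.mem_toFinset, ← map_mem_edgeSet_iff hadj]
    exact heG
  · intro f hf
    have hex : ∃ f' : Sym2 W, Sym2.map j f' = Sym2.map j f := ⟨f, rfl⟩
    rw [dif_pos hex]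
    have hch : hex.choose = f := Sym2.map.injective hj hex.choose_spec
    rw [hch, isCutEdge_map]

/-- Classification of the edges of `G` used for the section `K[H] → K[G]`. -/
def assignEdge (H : SimpleGraph W) (j : W → V) (v : W) (e : Sym2 V) : Option (Sym2 W) :=
  if h : ∃ f : Sym2 W, Sym2.map j f = e then some h.choose
  else if h2 : ∃ p : W × V, p.2 ∉ Set.range j ∧ e = s(j p.1, p.2) ∧ H.Adj v p.1 then
    some s(v, h2.choose.1)
  else none

lemma assignEdge_some_mem {G : SimpleGraph V} {H : SimpleGraph W} {j : W → V} {v : W}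
    (hadj : ∀ a b, H.Adj a b ↔ G.Adj (j a) (j b)) {e : Sym2 V} {f : Sym2 W}
    (he : e ∈ G.edgeSet) (hf : assignEdge H j v e = some f) : f ∈ H.edgeSet := by
  unfold assignEdge at hf
  split_ifs at hf with h1 h2
  · obtain rfl : h1.choose = f := Option.some_injective _ hf
    rw [← h1.choose_spec] at he
    exact (map_mem_edgeSet_iff hadj _).mp he
  · obtain rfl : s(v, h2.choose.1) = f := Option.some_injective _ hf
    exact (H.mem_edgeSet).mpr h2.choose_spec.2.2

lemma assignEdge_some_cut {H : SimpleGraph W} {j : W → V} (hj : Injective j) {v : W}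
    {e : Sym2 V} {f : Sym2 W} (hf : assignEdge H j v e = some f) (B : Set W) :
    IsCutEdge (liftSet j v B) e ↔ IsCutEdge B f := by
  unfold assignEdge at hf
  split_ifs at hf with h1 h2
  · have hcf : h1.choose = f := Option.some_injective _ hf
    have hspec : Sym2.map j f = e := hcf ▸ h1.choose_spec
    subst hspec
    rw [isCutEdge_map, preimage_liftSet hj]
  · have hcf : s(v, h2.choose.1) = f := Option.some_injective _ hf
    obtain ⟨hy, he2, -⟩ := h2.choose_spec
    rw [he2, ← hcf, isCutEdge_mk, isCutEdge_mk, mem_liftSet_apply hj, mem_liftSet_notrange hy]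
    tauto

lemma assignEdge_none_not_cut {G : SimpleGraph V} {H : SimpleGraph W} {j : W → V}
    (hj : Injective j) {v : W}
    (hnm : ∀ (a : W) (y : V), y ∉ Set.range j → G.Adj y (j a) → a = v ∨ H.Adj v a)
    {x y : V} (hxy : G.Adj x y) (hn : assignEdge H j v s(x, y) = none) (B : Set W) :
    ¬ IsCutEdge (liftSet j v B) s(x, y) := by
  unfold assignEdge at hn
  split_ifs at hn with h1 h2
  by_cases hx : x ∈ Set.range j <;> by_cases hy : y ∈ Set.range j
  · obtain ⟨a, rfl⟩ := hx
    obtain ⟨b, rfl⟩ := hy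
    exact absurd ⟨s(a, b), Sym2.map_pair_eq j a b⟩ h1
  · obtain ⟨a, rfl⟩ := hx
    rcases hnm a y hy hxy.symm with rfl | hH
    · rw [isCutEdge_mk, mem_liftSet_apply hj, mem_liftSet_notrange hy]
      tauto
    · exact absurd ⟨(a, y), hy, rfl, hH⟩ h2
  · obtain ⟨b, rfl⟩ := hy
    rcases hnm b x hx hxy with rfl | hH
    · rw [isCutEdge_mk, mem_liftSet_apply hj, mem_liftSet_notrange hx]
      tauto
    · exact absurd ⟨(b, x), hx, Sym2.eq_swap, hH⟩ h2
  · rw [isCutEdge_mk, mem_liftSet_notrange hx, mem_liftSet_notrange hy]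
    tauto

/-- Descend a variable substitution on the polynomial rings to the quotients, given a
compatible map on the ambient rings. -/
lemma descend_exists [Finite V] [Finite W] (G : SimpleGraph V) (H : SimpleGraph W)
    (t : Partition W → Partition V)
    (rho : MvPolynomial (Bool × Sym2 W) K →ₐ[K] MvPolynomial (Bool × Sym2 V) K)
    (hcomm : (phi K G).comp (rename t) = rho.comp (phi K H)) :
    ∃ Phi : (MvPolynomial (Partition W) K ⧸ cutIdeal K H) →ₐ[K]
        (MvPolynomial (Partition V) K ⧸ cutIdeal K G),
      ∀ f, Phi (Ideal.Quotient.mk (cutIdeal K H) f)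
        = Ideal.Quotient.mk (cutIdeal K G) (rename t f) := by
  have hker : ∀ a ∈ cutIdeal K H,
      ((Ideal.Quotient.mkₐ K (cutIdeal K G)).comp (rename t)) a = 0 := by
    intro a ha
    have ha' : phi K H a = 0 := RingHom.mem_ker.mp ha
    have h2 : phi K G (rename t a) = 0 := by
      have h3 := AlgHom.congr_fun hcomm a
      rw [AlgHom.comp_apply, AlgHom.comp_apply] at h3
      rw [h3, ha', map_zero]
    simp only [AlgHom.comp_apply, Ideal.Quotient.mkₐ_eq_mk]
    rw [Ideal.Quotient.eq_zero_iff_mem]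
    exact RingHom.mem_ker.mpr h2
  refine ⟨Ideal.Quotient.liftₐ _ _ hker, fun f => ?_⟩
  erw [Ideal.Quotient.liftₐ_apply, Ideal.Quotient.lift_mk]

/-- The main construction: under the neighborhood-minor-type hypotheses, `K[H]` is an
algebra retract of `K[G]`. -/
theorem core_retract [Finite V] [Finite W]
    (G : SimpleGraph V) (H : SimpleGraph W) (j : W → V) (hj : Injective j)
    (hadj : ∀ a b, H.Adj a b ↔ G.Adj (j a) (j b)) (v : W)
    (hnm : ∀ (a : W) (y : V), y ∉ Set.range j → G.Adj y (j a) → a = v ∨ H.Adj v a) :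
    CutAlgebraRetract K H G := by
  classical
  -- the projection π, defined uniformly
  have hcommdown : (phi K H).comp (rename (sigmaP j)) = (rhoDown K j).comp (phi K G) := by
    apply MvPolynomial.algHom_ext
    intro p
    induction p using Quotient.ind with
    | _ A =>
      simp only [AlgHom.comp_apply, rename_X, sigmaP, Quotient.map_mk]
      rw [phi_X, phi_X, rhoDown_cutMonomial K hj hadj]
  obtain ⟨piQ, hpi⟩ := descend_exists K H G (sigmaP j) (rhoDown K j) hcommdown
  have hpihom : ∀ d x, QuotHomogeneous K (cutIdeal K G) d x →
      ∃ d', QuotHomogeneous K (cutIdeal K H) d' (piQ x) := by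
    rintro d x ⟨f, hf, rfl⟩
    exact ⟨d, rename (sigmaP j) f, hf.rename_isHomogeneous, (hpi f).symm⟩
  rcases Set.eq_empty_or_nonempty H.edgeSet with hE | ⟨f₀, hf₀⟩
  · -- degenerate case: `H` has no edges, so `K[H] ≅ K`
    have cutMon1 : ∀ B : Set W, cutMonomial K H B = 1 := by
      intro B
      unfold cutMonomial
      rw [Set.Finite.toFinset_eq_empty.mpr hE, Finset.prod_empty]
    have hq1 : ∀ p : Partition W, Ideal.Quotient.mk (cutIdeal K H) (X p) = 1 := by
      intro p
      induction p using Quotient.ind with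
      | _ B =>
        rw [show (1 : MvPolynomial (Partition W) K ⧸ cutIdeal K H)
            = Ideal.Quotient.mk (cutIdeal K H) 1 from (map_one _).symm]
        rw [Ideal.Quotient.eq]
        refine RingHom.mem_ker.mpr ?_
        rw [map_sub, map_one, phi_X, cutMon1, sub_self]
    have hev : ∀ a ∈ cutIdeal K H,
        (aeval (fun _ : Partition W => (1 : K))) a = 0 := by
      intro a ha
      have hcomm1 : (aeval (fun _ : Bool × Sym2 W => (1 : K))).comp (phi K H)
          = aeval (fun _ : Partition W => (1 : K)) := by
        apply MvPolynomial.algHom_ext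
        intro p
        induction p using Quotient.ind with
        | _ B =>
          simp only [AlgHom.comp_apply, aeval_X]
          rw [phi_X, cutMon1, map_one]
      have ha' : phi K H a = 0 := RingHom.mem_ker.mp ha
      rw [← hcomm1, AlgHom.comp_apply, ha', map_zero]
    set QG := MvPolynomial (Partition V) K ⧸ cutIdeal K G with hQG
    have hkeri : ∀ a ∈ cutIdeal K H,
        ((Algebra.ofId K QG).comp (aeval (fun _ : Partition W => (1 : K)))) a = 0 := by
      intro a ha
      rw [AlgHom.comp_apply, hev a ha, map_zero]
    set iota := Ideal.Quotient.liftₐ (cutIdeal K H)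
      ((Algebra.ofId K QG).comp (aeval (fun _ : Partition W => (1 : K)))) hkeri with hiodef
    have hio : ∀ f, iota (Ideal.Quotient.mk (cutIdeal K H) f)
        = algebraMap K QG (aeval (fun _ : Partition W => (1 : K)) f) := by
      intro f
      erw [hiodef, Ideal.Quotient.liftₐ_apply, Ideal.Quotient.lift_mk]
    have hmkconst : ∀ f : MvPolynomial (Partition W) K,
        Ideal.Quotient.mk (cutIdeal K H) f
          = algebraMap K _ (aeval (fun _ : Partition W => (1 : K)) f) := by
      have heq : (Ideal.Quotient.mkₐ K (cutIdeal K H))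
          = (Algebra.ofId K _).comp (aeval (fun _ : Partition W => (1 : K))) := by
        apply MvPolynomial.algHom_ext
        intro p
        simp only [AlgHom.comp_apply, aeval_X, Ideal.Quotient.mkₐ_eq_mk, map_one]
        rw [hq1]
      intro f
      have := AlgHom.congr_fun heq f
      rw [Ideal.Quotient.mkₐ_eq_mk] at this
      exact this
    have hne : (cutIdeal K G) ≠ ⊤ := by
      intro htop
      have h1 : (1 : MvPolynomial (Partition V) K) ∈ cutIdeal K G := by
        rw [htop]; exact Submodule.mem_top
      have h2 : phi K G 1 = 0 := RingHom.mem_ker.mp h1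
      rw [map_one] at h2
      exact one_ne_zero h2
    haveI : Nontrivial QG := Ideal.Quotient.nontrivial_iff.mpr hne
    have halg : Injective (algebraMap K QG) := RingHom.injective _
    refine ⟨iota, piQ, ?_, ?_, hpihom, ?_⟩
    · intro x y hxy
      obtain ⟨f, rfl⟩ := Ideal.Quotient.mk_surjective x
      obtain ⟨g, rfl⟩ := Ideal.Quotient.mk_surjective y
      rw [hio f, hio g] at hxy
      rw [hmkconst f, hmkconst g, halg hxy]
    · rintro d x ⟨f, hf, rfl⟩
      refine ⟨0, C (aeval (fun _ : Partition W => (1 : K)) f), isHomogeneous_C _ _, ?_⟩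
      rw [← MvPolynomial.algebraMap_eq, Ideal.Quotient.mk_algebraMap, hio f]
    · apply Ideal.Quotient.algHom_ext
      apply MvPolynomial.algHom_ext
      intro p
      simp only [AlgHom.comp_apply, Ideal.Quotient.mkₐ_eq_mk, AlgHom.id_apply]
      rw [hio, hq1 p]
      simp only [aeval_X, map_one]
  · -- main case: `H` has an edge `f₀`
    set EG := (Set.toFinite G.edgeSet).toFinset with hEG
    set asg := assignEdge H j v with hasg
    set dead : MvPolynomial (Bool × Sym2 V) K :=
      ∏ e ∈ EG.filter (fun e => asg e = none), X (false, e) with hdeaddef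
    set gUp : Bool × Sym2 W → MvPolynomial (Bool × Sym2 V) K := fun bf =>
      (∏ e ∈ EG.filter (fun e => asg e = some bf.2), X (bf.1, e)) *
        (if bf.2 = f₀ then dead else 1) with hgUp
    have hkey : ∀ B : Set W,
        aeval gUp (cutMonomial K H B) = cutMonomial K G (liftSet j v B) := by
      intro B
      unfold cutMonomial
      rw [map_prod]
      have hterm : ∀ f : Sym2 W,
          aeval gUp (if IsCutEdge B f then (X (true, f) : MvPolynomial (Bool × Sym2 W) K)
            else X (false, f)) =
          (∏ e ∈ EG.filter (fun e => asg e = some f),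
            (if IsCutEdge B f then (X (true, e) : MvPolynomial (Bool × Sym2 V) K)
              else X (false, e))) * (if f = f₀ then dead else 1) := by
        intro f
        by_cases hc : IsCutEdge B f <;> simp [hgUp, hc]
      rw [Finset.prod_congr rfl fun f _ => hterm f, Finset.prod_mul_distrib,
        Finset.prod_ite_eq' _ f₀ (fun _ => dead),
        if_pos ((Set.Finite.mem_toFinset _).mpr hf₀)]
      -- now handle the right-hand side
      have hmaps : ∀ e ∈ EG, asg e ∈
          insert none (((Set.toFinite H.edgeSet).toFinset).image some) := by
        intro e he
        rcases ho : asg e with _ | f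
        · exact Finset.mem_insert_self _ _
        · refine Finset.mem_insert_of_mem (Finset.mem_image_of_mem some ?_)
          rw [Set.Finite.mem_toFinset]
          rw [hEG, Set.Finite.mem_toFinset] at he
          exact assignEdge_some_mem hadj he ho
      rw [← Finset.prod_fiberwise_of_maps_to hmaps
        (fun e => if IsCutEdge (liftSet j v B) e
          then (X (true, e) : MvPolynomial (Bool × Sym2 V) K) else X (false, e))]
      rw [Finset.prod_insert (by simp)]
      rw [Finset.prod_image (fun x _ y _ h => Option.some_injective _ h)]
      have hdead : (∏ e ∈ EG.filter (fun e => asg e = none),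
          (if IsCutEdge (liftSet j v B) e
            then (X (true, e) : MvPolynomial (Bool × Sym2 V) K) else X (false, e))) = dead := by
        rw [hdeaddef]
        refine Finset.prod_congr rfl fun e he => ?_
        induction e using Sym2.ind with
        | _ x y =>
          rw [Finset.mem_filter, hEG, Set.Finite.mem_toFinset] at he
          exact if_neg (assignEdge_none_not_cut hj hnm ((G.mem_edgeSet).mp he.1) he.2 B)
      rw [hdead]
      rw [mul_comm]
      congr 1
      refine Finset.prod_congr rfl fun f _ => ?_
      refine Finset.prod_congr rfl fun e he => ?_
      rw [Finset.mem_filter] at he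
      simp only [assignEdge_some_cut hj he.2]
    have hcommup : (phi K G).comp (rename (tauP hj v))
        = (aeval gUp : MvPolynomial (Bool × Sym2 W) K →ₐ[K]
            MvPolynomial (Bool × Sym2 V) K).comp (phi K H) := by
      apply MvPolynomial.algHom_ext
      intro p
      induction p using Quotient.ind with
      | _ B =>
        simp only [AlgHom.comp_apply, rename_X, tauP, Quotient.map_mk]
        rw [phi_X, phi_X, hkey]
    obtain ⟨iota, hio⟩ := descend_exists K G H (tauP hj v) (aeval gUp) hcommup
    have hid : piQ.comp iota = AlgHom.id K _ := by
      apply Ideal.Quotient.algHom_ext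
      apply MvPolynomial.algHom_ext
      intro p
      induction p using Quotient.ind with
      | _ B =>
        simp only [AlgHom.comp_apply, Ideal.Quotient.mkₐ_eq_mk, AlgHom.id_apply]
        rw [hio, hpi]
        simp only [rename_X]
        rw [sigmaP_tauP hj v]
    refine ⟨iota, piQ, ?_, ?_, hpihom, hid⟩
    · have hli : Function.LeftInverse piQ iota := by
        intro x
        have := AlgHom.congr_fun hid x
        rwa [AlgHom.comp_apply, AlgHom.id_apply] at this
      exact hli.injective
    · rintro d x ⟨f, hf, rfl⟩
      exact ⟨d, rename (tauP hj v) f, hf.rename_isHomogeneous, (hio f).symm⟩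

end Retract

theorem stmt6 {V : Type} [Fintype V] (K : Type) [Field K]
    (G : SimpleGraph V) (u v : V) (huv : u ≠ v)
    (h : G.neighborSet u ⊆ insert v (G.neighborSet v)) :
    (IsNeighborhoodMinor G ({u}ᶜ : Set V) ∧
      CutAlgebraRetract K (SimpleGraph.induce ({u}ᶜ : Set V) G) G) ∧
    ∀ w : V, CutAlgebraRetract K G
      (SimpleGraph.comap (Sum.elim id fun _ : Unit => w) G) := by
  have hvmem : v ∈ ({u}ᶜ : Set V) := Set.mem_compl_singleton_iff.mpr huv.symm
  refine ⟨⟨⟨⟨v, hvmem⟩, ⟨u, by simp⟩, v, hvmem, ?_⟩, ?_⟩, ?_⟩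
  · intro x hx hy
    obtain ⟨y, hy1, hy2⟩ := hy
    have hyu : y = u := by simpa using hy1
    subst hyu
    have hx2 : x ∈ insert v (G.neighborSet v) := h hy2
    rcases Set.mem_insert_iff.mp hx2 with rfl | hmem
    · exact Or.inl rfl
    · exact Or.inr hmem
  · refine core_retract K G (SimpleGraph.induce ({u}ᶜ : Set V) G)
      Subtype.val Subtype.val_injective (fun a b => by simp) ⟨v, hvmem⟩ ?_
    intro a y hy hadj'
    have hyu : y = u := by
      rw [Subtype.range_coe] at hy
      simpa using hy
    subst hyu
    have hx2 : (a : V) ∈ insert v (G.neighborSet v) := h hadj'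
    rcases Set.mem_insert_iff.mp hx2 with hva | hmem
    · exact Or.inl (Subtype.ext hva)
    · exact Or.inr (by simpa using hmem)
  · intro w
    refine core_retract K (SimpleGraph.comap (Sum.elim id fun _ : Unit => w) G) G
      Sum.inl Sum.inl_injective (fun a b => by simp) w ?_
    intro a y hy hadjy
    match y with
    | Sum.inl y' => exact absurd ⟨y', rfl⟩ hy
    | Sum.inr _ =>
      refine Or.inr ?_
      simpa using hadjy

end CutPaper
end
end
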